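/- Let G = (W ∪ D, E) be the bipartite graph of an (N,K,L,R)-gradient code with N = K, where every vertex in D has degree L and every vertex in W has degree L, and G is connected. For any T ⊆ D with |T| = η ≤ N/4, letting S = |N(T)| be the number of neighbors of T, we have L·S = L·η + |∂(S∪T)| where ∂(S∪T) is the boundary of N(T) ∪ T in G, and consequently S ≥ ((3L − λ₂)/(L + λ₂))·η, where λ₂ is the second largest adjacency eigenvalue of G. -/

import Mathlib

/-!
Counting the `L·|A|` edge-ends at `A = N(T) ∪ T`: the ones inside `A` are the `2L·|T|` ends of
edges between `T` and `N(T)`, the others cross the cut, which gives the identity.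

For the bound, the vector equal to `|Aᶜ|` on `A` and to `-|A|` off `A` is orthogonal to the
Perron eigenvector (constant, by connectedness), so comparing its Rayleigh quotient with its
Laplacian form yields the expander mixing inequality `(L - λ₂)·|A|·|Aᶜ| ≤ 2n·e(A, Aᶜ)`.
If `|A| ≤ n` this becomes `(L - λ₂)(S + η) ≤ 2L(S - η)`, which rearranges to the claim.
If `|A| > n` then `S > 3η`, and `λ₂ ≥ 0` because the bipartite graph also has the eigenvalue
`-L` while all eigenvalues add up to the trace `0`.
-/

open Finset Matrix

namespace Finset

lemma sum_ite_mem_univ {ι M : Type*} [Fintype ι] [DecidableEq ι] [AddCommMonoid M]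
    (s : Finset ι) (a b : M) : ∑ i, (if i ∈ s then a else b) = #s • a + #sᶜ • b := by
  rw [← sum_add_sum_compl s, sum_congr rfl fun i hi => if_pos hi,
    sum_congr rfl fun i hi => if_neg (mem_compl.1 hi), sum_const, sum_const]

section Sum

variable {α β : Type*} [DecidableEq α] [DecidableEq β] (s : Finset α) (t : Finset β)

lemma disjoint_image_inl_image_inr : Disjoint (s.image Sum.inl) (t.image Sum.inr) :=
  disjoint_left.2 (by simp)

lemma card_image_inl_union_image_inr : #(s.image Sum.inl ∪ t.image Sum.inr) = #s + #t := by
  rw [card_union_of_disjoint (disjoint_image_inl_image_inr s t),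
    card_image_of_injective _ Sum.inl_injective, card_image_of_injective _ Sum.inr_injective]

end Sum

end Finset

namespace Matrix.IsHermitian

variable {V : Type*} [Fintype V] [DecidableEq V] {A : Matrix V V ℝ}

lemma dotProduct_mulVec_le_of_dotProduct_eigenvectorBasis_eq_zero (hA : A.IsHermitian) {i₀ : V}
    {c : ℝ} (hc : ∀ i ≠ i₀, hA.eigenvalues i ≤ c) {x : V → ℝ}
    (hx : x ⬝ᵥ hA.eigenvectorBasis i₀ = 0) :
    x ⬝ᵥ (A *ᵥ x) ≤ c * (x ⬝ᵥ x) := by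
  set b := hA.eigenvectorBasis
  have hcoef : ∀ i, (A *ᵥ x) ⬝ᵥ b i = hA.eigenvalues i * (x ⬝ᵥ b i) := fun i => by
    rw [dotProduct_comm, dotProduct_mulVec, ← mulVec_transpose,
      ← conjTranspose_eq_transpose_of_trivial, hA.eq, hA.mulVec_eigenvectorBasis,
      smul_dotProduct, dotProduct_comm, smul_eq_mul]
  have hexpand : ∀ y, x ⬝ᵥ y = ∑ i, (x ⬝ᵥ b i) * (y ⬝ᵥ b i) := fun y => by
    have := b.sum_inner_mul_inner (WithLp.toLp 2 x) (WithLp.toLp 2 y)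
    simp only [EuclideanSpace.inner_eq_star_dotProduct, star_trivial] at this
    simpa [dotProduct_comm, mul_comm] using this.symm
  rw [hexpand (A *ᵥ x), hexpand x, mul_sum]
  refine sum_le_sum fun i _ => ?_
  rw [hcoef, mul_left_comm]
  by_cases hi : i = i₀
  · simp [hi, hx]
  · exact mul_le_mul_of_nonneg_right (hc i hi) (mul_self_nonneg _)

lemma exists_eigenvalues_eq_of_mulVec_eq_smul (hA : A.IsHermitian) {μ : ℝ} {x : V → ℝ}
    (hx₀ : x ≠ 0) (hx : A *ᵥ x = μ • x) : ∃ i, hA.eigenvalues i = μ := by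
  have : Module.End.HasEigenvalue (toLin' A) μ := Module.End.hasEigenvalue_of_hasEigenvector
    ⟨Module.End.mem_eigenspace_iff.2 (by simpa using hx), hx₀⟩
  rw [← Set.mem_range, ← hA.spectrum_real_eq_range_eigenvalues, ← spectrum_toLin']
  exact this.mem_spectrum

lemma nonneg_of_forall_eigenvalues_le (hA : A.IsHermitian) (htr : A.trace = 0) {i₀ j : V}
    (hij : i₀ ≠ j) (hsum : hA.eigenvalues i₀ + hA.eigenvalues j = 0)
    (hcard : 2 < Fintype.card V) {c : ℝ} (hc : ∀ i ≠ i₀, hA.eigenvalues i ≤ c) : 0 ≤ c := by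
  have hrest : ∑ i ∈ univ \ {i₀, j}, hA.eigenvalues i = 0 := by
    have htr' : ∑ i, hA.eigenvalues i = 0 := by
      simpa [htr] using hA.trace_eq_sum_eigenvalues.symm
    have := sum_sdiff (subset_univ {i₀, j}) (f := hA.eigenvalues)
    rwa [sum_pair hij, hsum, add_zero, htr'] at this
  have hne : (univ \ {i₀, j}).Nonempty := by
    rw [← card_pos, card_sdiff_of_subset (subset_univ _), card_univ, card_pair hij]
    omega
  obtain ⟨i, hi, hi0⟩ :=
    exists_le_of_sum_le hne (f := 0) (g := hA.eigenvalues) (by simp [hrest])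
  have hi₀ : i ≠ i₀ := by
    simp only [mem_sdiff, mem_insert, mem_singleton] at hi
    tauto
  exact hi0.trans (hc i hi₀)

end Matrix.IsHermitian

namespace SimpleGraph

section Interedges

variable {V : Type*} (G : SimpleGraph V) [DecidableRel G.Adj]

lemma card_interedges_comm (s t : Finset V) :
    #(G.interedges s t) = #(G.interedges t s) :=
  haveI := G.symm
  Rel.card_interedges_comm s t

lemma card_interedges_eq_zero {s t : Finset V} (h : ∀ a ∈ s, ∀ b ∈ t, ¬ G.Adj a b) :
    #(G.interedges s t) = 0 := by
  rw [card_eq_zero, eq_empty_iff_forall_notMem]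
  rintro ⟨a, b⟩ hab
  rw [mk_mem_interedges_iff] at hab
  exact h a hab.1 b hab.2.1 hab.2.2

variable [DecidableEq V]

lemma card_interedges_union_left {s s' : Finset V} (h : Disjoint s s') (t : Finset V) :
    #(G.interedges (s ∪ s') t) = #(G.interedges s t) + #(G.interedges s' t) := by
  rw [← card_union_of_disjoint (G.interedges_disjoint_left h t)]
  congr 1
  ext
  simp only [mem_interedges_iff, mem_union]
  tauto

lemma card_interedges_union_right (s : Finset V) {t t' : Finset V} (h : Disjoint t t') :
    #(G.interedges s (t ∪ t')) = #(G.interedges s t) + #(G.interedges s t') := by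
  rw [card_interedges_comm, card_interedges_union_left _ h, card_interedges_comm,
    card_interedges_comm G t']

variable [Fintype V]

lemma card_interedges_add_card_interedges_compl_eq_sum_degree (s t : Finset V) :
    #(G.interedges s t) + #(G.interedges s tᶜ) = ∑ a ∈ s, G.degree a := by
  simp only [interedges_def, card_filter, sum_product, ← sum_add_distrib, sum_add_sum_compl]
  refine sum_congr rfl fun a _ => ?_
  rw [sum_boole, ← card_neighborFinset_eq_degree, neighborFinset_eq_filter, Nat.cast_id]

lemma card_filter_adj_mem_notMem (s : Finset V) :
    #{p : V × V | G.Adj p.1 p.2 ∧ p.1 ∈ s ∧ p.2 ∉ s} = #(G.interedges s sᶜ) := by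
  congr 1
  ext ⟨u, v⟩
  simp only [mem_filter, mem_univ, true_and, mk_mem_interedges_iff, mem_compl]
  tauto

lemma lapMatrix_toLinearMap₂'_ite (s : Finset V) (a b : ℝ) :
    toLinearMap₂' ℝ (G.lapMatrix ℝ) (fun v => if v ∈ s then a else b)
      (fun v => if v ∈ s then a else b) = (a - b) ^ 2 * #(G.interedges s sᶜ) := by
  have hterm : ∀ u v, (if G.Adj u v then ((if u ∈ s then a else b) - if v ∈ s then a else b) ^ 2
      else 0) = (a - b) ^ 2 * ((if (u, v) ∈ G.interedges s sᶜ then 1 else 0) +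
        if (u, v) ∈ G.interedges sᶜ s then 1 else 0) := fun u v => by
    by_cases hu : u ∈ s <;> by_cases hv : v ∈ s <;> by_cases huv : G.Adj u v <;>
      simp [mk_mem_interedges_iff, hu, hv, huv, sub_sq_comm b a]
  have hcard : ∀ X : Finset (V × V), ∑ u, ∑ v, (if (u, v) ∈ X then (1 : ℝ) else 0) = #X := by
    intro X
    rw [← Fintype.sum_prod_type']
    simp
  rw [lapMatrix_toLinearMap₂']
  simp only [hterm, ← mul_sum, sum_add_distrib, hcard, G.card_interedges_comm sᶜ s]
  ring

end Interedges

namespace IsRegularOfDegree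

variable {V : Type*} [Fintype V] [DecidableEq V] {G : SimpleGraph V} [DecidableRel G.Adj] {L : ℕ}

lemma card_interedges_add_card_interedges_compl (hreg : G.IsRegularOfDegree L) (s t : Finset V) :
    #(G.interedges s t) + #(G.interedges s tᶜ) = L * #s := by
  rw [G.card_interedges_add_card_interedges_compl_eq_sum_degree, sum_congr rfl fun a _ => hreg a,
    sum_const, smul_eq_mul, mul_comm]

theorem mul_card_eq_mul_card_add_card_interedges_compl (hreg : G.IsRegularOfDegree L)
    {N D : Finset V} (hND : Disjoint N D) (hN : ∀ a ∈ N, ∀ b ∈ N, ¬ G.Adj a b)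
    (hD : ∀ a ∈ D, ∀ b ∈ D, ¬ G.Adj a b) (hDN : ∀ a ∈ D, ∀ b, G.Adj a b → b ∈ N) :
    L * #N = L * #D + #(G.interedges (N ∪ D) (N ∪ D)ᶜ) := by
  have hNN := G.card_interedges_eq_zero hN
  have hDD := G.card_interedges_eq_zero hD
  have hDNc : #(G.interedges D Nᶜ) = 0 :=
    G.card_interedges_eq_zero fun a ha b hb hab => mem_compl.1 hb (hDN a ha b hab)
  have hdegD := hreg.card_interedges_add_card_interedges_compl D N
  have hdegA := hreg.card_interedges_add_card_interedges_compl (N ∪ D) (N ∪ D)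
  rw [card_union_of_disjoint hND, G.card_interedges_union_left hND,
    G.card_interedges_union_right _ hND, G.card_interedges_union_right _ hND,
    G.card_interedges_comm N D] at hdegA
  linarith

lemma lapMatrix_eq (hreg : G.IsRegularOfDegree L) :
    G.lapMatrix ℝ = (L : ℝ) • 1 - G.adjMatrix ℝ := by
  rw [lapMatrix, degMatrix, funext fun v => (congrArg Nat.cast (hreg v) : (G.degree v : ℝ) = L)]
  simp [smul_one_eq_diagonal]

lemma eq_of_adjMatrix_mulVec_eq_smul (hreg : G.IsRegularOfDegree L) (hconn : G.Connected)
    {x : V → ℝ} (hx : G.adjMatrix ℝ *ᵥ x = (L : ℝ) • x) (i j : V) : x i = x j := by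
  refine G.lapMatrix_mulVec_eq_zero_iff_forall_reachable.1 ?_ i j (hconn i j)
  rw [hreg.lapMatrix_eq, sub_mulVec, hx, smul_mulVec, one_mulVec, sub_self]

lemma dotProduct_adjMatrix_mulVec (hreg : G.IsRegularOfDegree L) (x : V → ℝ) :
    x ⬝ᵥ (G.adjMatrix ℝ *ᵥ x) = L * (x ⬝ᵥ x) - toLinearMap₂' ℝ (G.lapMatrix ℝ) x x := by
  rw [toLinearMap₂'_apply', hreg.lapMatrix_eq, sub_mulVec, dotProduct_sub, smul_mulVec,
    one_mulVec, dotProduct_smul, smul_eq_mul]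
  ring

theorem sub_mul_card_mul_card_compl_le (hreg : G.IsRegularOfDegree L) (hconn : G.Connected)
    (hA : (G.adjMatrix ℝ).IsHermitian) {i₀ : V} (hi₀ : hA.eigenvalues i₀ = L) {c : ℝ}
    (hc : ∀ i ≠ i₀, hA.eigenvalues i ≤ c) (s : Finset V) :
    (L - c) * #s * #sᶜ ≤ Fintype.card V * #(G.interedges s sᶜ) := by
  obtain ⟨v₀⟩ := hconn.nonempty
  set m : ℝ := (#s : ℝ)
  set m' : ℝ := (#sᶜ : ℝ)
  have hcard : (Fintype.card V : ℝ) = m + m' := by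
    rw [← card_add_card_compl s]; push_cast; rfl
  have hpos : 0 < m + m' := by rw [← hcard]; exact_mod_cast Fintype.card_pos_iff.2 ⟨v₀⟩
  set x : V → ℝ := fun v => if v ∈ s then m' else -m
  have hconst := hreg.eq_of_adjMatrix_mulVec_eq_smul hconn (hi₀ ▸ hA.mulVec_eigenvectorBasis i₀)
  have horth : x ⬝ᵥ hA.eigenvectorBasis i₀ = 0 := by
    rw [dotProduct, sum_congr rfl fun v _ => by rw [hconst v v₀], ← sum_mul, sum_ite_mem_univ]
    simp only [nsmul_eq_mul]
    ring
  have hxx : x ⬝ᵥ x = m * m' * (m + m') := by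
    have hsq : ∀ v, x v * x v = if v ∈ s then m' * m' else m * m := fun v => by
      unfold x; split_ifs <;> ring
    rw [dotProduct, sum_congr rfl fun v _ => hsq v, sum_ite_mem_univ]
    simp only [nsmul_eq_mul]
    ring
  have hquad := hreg.dotProduct_adjMatrix_mulVec x
  rw [G.lapMatrix_toLinearMap₂'_ite, hxx] at hquad
  have hray := hA.dotProduct_mulVec_le_of_dotProduct_eigenvectorBasis_eq_zero hc horth
  rw [hquad, hxx, sub_neg_eq_add] at hray
  rw [hcard]
  refine le_of_mul_le_mul_right ?_ hpos
  linear_combination hray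

end IsRegularOfDegree

section Bipartite

variable {α β : Type*} [Fintype α] [Fintype β] {G : SimpleGraph (α ⊕ β)} [DecidableRel G.Adj]
  {L : ℕ}

lemma IsRegularOfDegree.adjMatrix_mulVec_sumElim (hreg : G.IsRegularOfDegree L)
    (hα : ∀ a a' : α, ¬ G.Adj (.inl a) (.inl a')) (hβ : ∀ b b' : β, ¬ G.Adj (.inr b) (.inr b')) :
    G.adjMatrix ℝ *ᵥ Sum.elim (fun _ => 1) (fun _ => -1) =
      -(L : ℝ) • Sum.elim (fun _ => 1) (fun _ => -1) := by
  set x : α ⊕ β → ℝ := Sum.elim (fun _ => 1) (fun _ => -1)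
  have hconst : ∀ u t, (∀ v, G.Adj u v → x v = t) → (G.adjMatrix ℝ *ᵥ x) u = L * t :=
    fun u t h => by
      rw [adjMatrix_mulVec_apply, sum_congr rfl fun v hv => h v ((mem_neighborFinset _ _ _).1 hv),
        sum_const, card_neighborFinset_eq_degree, hreg, nsmul_eq_mul]
  ext (a | b)
  · rw [hconst _ (-1)]
    · simp [x]
    · rintro (a' | b) h
      exacts [absurd h (hα _ _), rfl]
  · rw [hconst _ 1]
    · simp [x]
    · rintro (a | b') h
      exacts [rfl, absurd h (hβ _ _)]

variable [DecidableEq α] [DecidableEq β]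

theorem IsRegularOfDegree.mul_card_eq_mul_card_add_card_interedges_image
    (hreg : G.IsRegularOfDegree L) (hα : ∀ a a' : α, ¬ G.Adj (.inl a) (.inl a'))
    (hβ : ∀ b b' : β, ¬ G.Adj (.inr b) (.inr b')) {N : Finset α} {T : Finset β}
    (hN : ∀ b ∈ T, ∀ a, G.Adj (.inr b) (.inl a) → a ∈ N) :
    L * #N = L * #T +
      #(G.interedges (N.image .inl ∪ T.image .inr) (N.image .inl ∪ T.image .inr)ᶜ) := by
  have hnbr : ∀ u ∈ T.image .inr, ∀ v, G.Adj u v → v ∈ N.image .inl := by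
    rintro _ hu (a | b') huv <;> obtain ⟨b, hb, rfl⟩ := mem_image.1 hu
    · exact mem_image_of_mem _ (hN b hb a huv)
    · exact absurd huv (hβ b b')
  have := hreg.mul_card_eq_mul_card_add_card_interedges_compl
    (disjoint_image_inl_image_inr N T) (by simp [hα]) (by simp [hβ]) hnbr
  rwa [card_image_of_injective _ Sum.inl_injective,
    card_image_of_injective _ Sum.inr_injective] at this

theorem IsRegularOfDegree.nonneg_of_forall_eigenvalues_le (hreg : G.IsRegularOfDegree L)
    (hL : 0 < L) (hα : ∀ a a' : α, ¬ G.Adj (.inl a) (.inl a'))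
    (hβ : ∀ b b' : β, ¬ G.Adj (.inr b) (.inr b')) (hA : (G.adjMatrix ℝ).IsHermitian)
    {i₀ : α ⊕ β} (hi₀ : hA.eigenvalues i₀ = L) (hcard : 2 < Fintype.card (α ⊕ β)) {c : ℝ}
    (hc : ∀ i ≠ i₀, hA.eigenvalues i ≤ c) : 0 ≤ c := by
  obtain ⟨u⟩ : Nonempty (α ⊕ β) := Fintype.card_pos_iff.1 (by omega)
  have hx₀ : (Sum.elim (fun _ => 1) (fun _ => -1) : α ⊕ β → ℝ) ≠ 0 := fun h => by
    have := congrFun h u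
    rcases u <;> simp at this
  obtain ⟨j, hj⟩ :=
    hA.exists_eigenvalues_eq_of_mulVec_eq_smul hx₀ (hreg.adjMatrix_mulVec_sumElim hα hβ)
  refine hA.nonneg_of_forall_eigenvalues_le (G.trace_adjMatrix (α := ℝ)) (j := j) ?_
    (by rw [hi₀, hj]; ring) hcard hc
  rintro rfl
  rw [hi₀] at hj
  have : (L : ℝ) = 0 := by linarith
  exact hL.ne' (by exact_mod_cast this)

end Bipartite

end SimpleGraph

lemma div_mul_le_of_mixing_bound {L c n S η e m' : ℝ} (hL : 0 ≤ L) (hc : 0 ≤ c) (hS : 0 ≤ S)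
    (hη : 0 ≤ η) (he : 0 ≤ e) (hηn : 4 * η ≤ n) (hcompl : S + η + m' = 2 * n)
    (hid : L * S = L * η + e) (hmix : (L - c) * (S + η) * m' ≤ 2 * n * e) :
    (3 * L - c) / (L + c) * η ≤ S := by
  rcases (add_nonneg hL hc).eq_or_lt with hzero | hpos
  · rw [← hzero, div_zero, zero_mul]
    exact hS
  rw [div_mul_eq_mul_div, div_le_iff₀ hpos]
  rcases le_or_gt (S + η) n with hsmall | hlarge
  · have hcut : (L - c) * (S + η) ≤ 2 * e := by
      rcases le_or_gt L c with hLc | hLc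
      · nlinarith
      rcases (hη.trans (by linarith : η ≤ n)).eq_or_lt with hn | hn
      · nlinarith
      have hgap : 0 ≤ (L - c) * (S + η) * (m' - n) :=
        mul_nonneg (mul_nonneg (by linarith) (by linarith)) (by linarith)
      refine le_of_mul_le_mul_left ?_ hn
      linarith
    linarith
  · nlinarith

/-- Proposition 1: adversarial threshold lower bound. For the connected L-regular bipartite
graph G = (W ∪ D, E) of a gradient code with N = K = n, any T ⊆ D with |T| = η ≤ n/4
satisfies L·|N(T)| = L·η + |∂(N(T) ∪ T)|, and hence |N(T)| ≥ ((3L − λ₂)/(L + λ₂))·η. -/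
theorem adversarial_threshold_lower_bound (n L : ℕ)
    (G : SimpleGraph (Fin n ⊕ Fin n)) [DecidableRel G.Adj]
    (hbipW : ∀ w w' : Fin n, ¬ G.Adj (Sum.inl w) (Sum.inl w'))
    (hbipD : ∀ d d' : Fin n, ¬ G.Adj (Sum.inr d) (Sum.inr d'))
    (hconn : G.Connected) (hreg : G.IsRegularOfDegree L)
    (hA : (G.adjMatrix ℝ).IsHermitian)
    (i₀ : Fin n ⊕ Fin n) (hi₀ : hA.eigenvalues i₀ = L)
    (lam2 : ℝ) (hlam2 : lam2 = sSup {x : ℝ | ∃ i, i ≠ i₀ ∧ hA.eigenvalues i = x})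
    (T : Finset (Fin n)) (hT : (T.card : ℝ) ≤ (n : ℝ) / 4)
    (NT : Finset (Fin n))
    (hNT : NT = Finset.univ.filter (fun w => ∃ d ∈ T, G.Adj (Sum.inl w) (Sum.inr d)))
    (A : Finset (Fin n ⊕ Fin n)) (hAdef : A = NT.image Sum.inl ∪ T.image Sum.inr)
    (bd : ℕ)
    (hbd : bd = (Finset.univ.filter
        (fun p : (Fin n ⊕ Fin n) × (Fin n ⊕ Fin n) =>
          G.Adj p.1 p.2 ∧ p.1 ∈ A ∧ p.2 ∉ A)).card) :
    (L : ℝ) * NT.card = (L : ℝ) * T.card + bd ∧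
      ((3 * (L : ℝ) - lam2) / ((L : ℝ) + lam2)) * T.card ≤ NT.card := by
  rw [G.card_filter_adj_mem_notMem] at hbd
  have hidentity : L * #NT = L * #T + bd := by
    rw [hbd, hAdef]
    exact hreg.mul_card_eq_mul_card_add_card_interedges_image hbipW hbipD
      fun d hd w hdw => by simpa [hNT] using ⟨d, hd, hdw.symm⟩
  refine ⟨by exact_mod_cast hidentity, ?_⟩
  rcases T.eq_empty_or_nonempty with rfl | hTne
  · simp
  have hn : 4 ≤ n := by
    have : (1 : ℝ) ≤ #T := by exact_mod_cast hTne.card_pos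
    exact_mod_cast (by linarith : (4 : ℝ) ≤ n)
  have hL : 0 < L := by
    have : Nontrivial (Fin n ⊕ Fin n) := ⟨⟨.inl ⟨0, by omega⟩, .inr ⟨0, by omega⟩, Sum.inl_ne_inr⟩⟩
    simpa [hreg _] using hconn.preconnected.degree_pos_of_nontrivial (.inl ⟨0, by omega⟩)
  have hc : ∀ i ≠ i₀, hA.eigenvalues i ≤ lam2 := fun i hi => hlam2 ▸ le_csSup
    ((Set.finite_range hA.eigenvalues).subset (by rintro _ ⟨j, -, rfl⟩; exact ⟨j, rfl⟩)).bddAbove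
    ⟨i, hi, rfl⟩
  have hcard : Fintype.card (Fin n ⊕ Fin n) = 2 * n := by simp [two_mul]
  have hcompl := card_add_card_compl A
  have hmix := hreg.sub_mul_card_mul_card_compl_le hconn hA hi₀ hc A
  rw [hAdef, card_image_inl_union_image_inr, ← hAdef, hcard] at hcompl hmix
  rw [← hbd] at hmix
  push_cast at hmix
  exact div_mul_le_of_mixing_bound (m' := #Aᶜ) (by positivity)
    (hreg.nonneg_of_forall_eigenvalues_le hL hbipW hbipD hA hi₀ (by omega) hc) (by positivity)
    (by positivity) (by positivity) (by linarith) (by exact_mod_cast hcompl)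
    (by exact_mod_cast hidentity) hmix
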